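/- For all a₁ > 0, a₂ > 0, y real, q ≠ 0, t > 0, ∫₀ᵗ exp(−y²/(4a₁(t−τ))) · exp(−q²/(4a₂τ)) · 1/(τ^{3/2}·√(t−τ)) dτ = (2√(πa₂)/(|q|√t)) · exp(−(|y|/(2√(a₁t)) + |q|/(2√(a₂t)))²). -/

import Mathlib

open Real MeasureTheory Set

/-!
The substitution `τ = t / (1 + w²)` maps `(0, ∞)` onto `(0, t)` and turns the integral, with
`β = y² / (4 a₁)` and `γ = q² / (4 a₂)`, into `(2 / t) e^{-(β + γ) / t}` times the classical
`∫₀^∞ exp (-A w² - B / w²) dw = ½ √(π / A) e^{-2 √(A B)}`. For the latter, completing the square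
leaves `exp (-(p w - r / w)²)`; the inversion `w ↦ r / (p w)` swaps the two branches of
`u = p w - r / w`, so averaging the weights `1` and `r / (p w²)` produces the Jacobian `p + r / w²`
of `u`, and the integral becomes the Gaussian integral over `ℝ` divided by `2 p`.
-/

section ConstDiv

variable {E : Type*} [NormedAddCommGroup E] [NormedSpace ℝ E] {c : ℝ}

lemma image_const_div_Ioi (hc : 0 < c) : (fun x => c / x) '' Ioi 0 = Ioi 0 :=
  Subset.antisymm (image_subset_iff.2 fun _ hx => div_pos hc hx)
    fun x hx => ⟨c / x, div_pos hc hx, div_div_cancel₀ hc.ne'⟩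

lemma hasDerivWithinAt_const_div_Ioi (c : ℝ) {x : ℝ} (hx : x ∈ Ioi (0 : ℝ)) :
    HasDerivWithinAt (fun x => c / x) (-(c / x ^ 2)) (Ioi 0) x := by
  have := (hasDerivAt_inv (ne_of_gt hx)).const_mul c
  simp only [mul_neg, ← div_eq_mul_inv] at this
  exact this.hasDerivWithinAt

lemma injOn_const_div_Ioi (hc : c ≠ 0) : InjOn (fun x => c / x) (Ioi 0) := fun x _ y _ hxy => by
  simpa only [div_div_cancel₀ hc] using congrArg (c / ·) hxy

lemma abs_neg_const_div_sq (hc : 0 ≤ c) (x : ℝ) : |-(c / x ^ 2)| = c / x ^ 2 := by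
  rw [abs_neg, abs_of_nonneg (by positivity)]

lemma integral_Ioi_comp_const_div (hc : 0 < c) (g : ℝ → E) :
    ∫ x in Ioi 0, (c / x ^ 2) • g (c / x) = ∫ x in Ioi 0, g x := by
  conv_rhs => rw [← image_const_div_Ioi hc]
  rw [integral_image_eq_integral_abs_deriv_smul measurableSet_Ioi
    (fun x hx => hasDerivWithinAt_const_div_Ioi c hx) (injOn_const_div_Ioi hc.ne')]
  exact setIntegral_congr_fun measurableSet_Ioi fun x hx => by rw [abs_neg_const_div_sq hc.le x]

lemma integrableOn_Ioi_comp_const_div_iff (hc : 0 < c) {g : ℝ → E} :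
    IntegrableOn (fun x => (c / x ^ 2) • g (c / x)) (Ioi 0) ↔ IntegrableOn g (Ioi 0) := by
  conv_rhs => rw [← image_const_div_Ioi hc]
  rw [integrableOn_image_iff_integrableOn_abs_deriv_smul measurableSet_Ioi
    (fun x hx => hasDerivWithinAt_const_div_Ioi c hx) (injOn_const_div_Ioi hc.ne')]
  exact integrableOn_congr_fun (fun x hx => by rw [abs_neg_const_div_sq hc.le x]) measurableSet_Ioi

end ConstDiv

section MulSubDiv

variable {E : Type*} [NormedAddCommGroup E] [NormedSpace ℝ E] {p r : ℝ}

lemma hasDerivAt_mul_sub_div (p r : ℝ) {x : ℝ} (hx : x ≠ 0) :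
    HasDerivAt (fun x => p * x - r / x) (p + r / x ^ 2) x := by
  have := ((hasDerivAt_id x).const_mul p).sub ((hasDerivAt_inv hx).const_mul r)
  simp only [id, mul_one, mul_neg, sub_neg_eq_add, ← div_eq_mul_inv] at this
  exact this

lemma strictMonoOn_mul_sub_div (hp : 0 < p) (hr : 0 < r) :
    StrictMonoOn (fun x => p * x - r / x) (Ioi 0) := fun _ hx _ _ hxy =>
  sub_lt_sub (mul_lt_mul_of_pos_left hxy hp) (div_lt_div_of_pos_left hr hx hxy)

lemma image_mul_sub_div_Ioi (hp : 0 < p) (hr : 0 < r) :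
    (fun x => p * x - r / x) '' Ioi 0 = univ := by
  refine eq_univ_of_forall fun z => ?_
  set D := √(z ^ 2 + 4 * p * r)
  have hD : D ^ 2 = z ^ 2 + 4 * p * r := sq_sqrt (by positivity)
  have hzD : |z| < D := by
    rw [← sqrt_sq_eq_abs]
    exact sqrt_lt_sqrt (sq_nonneg z) (by nlinarith)
  have hx : 0 < z + D := by linarith [neg_abs_le z]
  refine ⟨(z + D) / (2 * p), div_pos hx (by positivity), ?_⟩
  field_simp
  linear_combination hD

lemma abs_add_div_sq (hp : 0 < p) (hr : 0 ≤ r) {x : ℝ} (hx : x ∈ Ioi (0 : ℝ)) :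
    |p + r / x ^ 2| = p + r / x ^ 2 := by
  have : 0 < x := hx
  exact abs_of_pos (by positivity)

lemma integral_eq_integral_Ioi_comp_mul_sub_div (hp : 0 < p) (hr : 0 < r) (f : ℝ → E) :
    ∫ y, f y = ∫ x in Ioi 0, (p + r / x ^ 2) • f (p * x - r / x) := by
  rw [← setIntegral_univ, ← image_mul_sub_div_Ioi hp hr,
    integral_image_eq_integral_abs_deriv_smul measurableSet_Ioi
      (fun x hx => (hasDerivAt_mul_sub_div p r (ne_of_gt hx)).hasDerivWithinAt)
      (strictMonoOn_mul_sub_div hp hr).injOn]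
  exact setIntegral_congr_fun measurableSet_Ioi fun x hx => by rw [abs_add_div_sq hp hr.le hx]

lemma integrableOn_Ioi_comp_mul_sub_div (hp : 0 < p) (hr : 0 < r) {f : ℝ → E}
    (hf : Integrable f) : IntegrableOn (fun x => f (p * x - r / x)) (Ioi 0) := by
  have hweighted := (integrableOn_image_iff_integrableOn_abs_deriv_smul measurableSet_Ioi
    (fun x hx => (hasDerivAt_mul_sub_div p r (ne_of_gt hx)).hasDerivWithinAt)
    (strictMonoOn_mul_sub_div hp hr).injOn f).1
      (by rw [image_mul_sub_div_Ioi hp hr]; exact hf.integrableOn)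
  have hne : ∀ x ∈ Ioi (0 : ℝ), p + r / x ^ 2 ≠ 0 := fun x hx => by
    rw [← abs_add_div_sq hp hr.le hx]; positivity
  refine IntegrableOn.congr_fun
    (hweighted.bdd_smul p⁻¹ (φ := fun x => (p + r / x ^ 2)⁻¹) ?_ ?_)
    (fun x hx => ?_) measurableSet_Ioi
  · refine ContinuousOn.aestronglyMeasurable (fun x hx => ?_) measurableSet_Ioi
    have : x ^ 2 ≠ 0 := pow_ne_zero 2 (ne_of_gt hx)
    have := hne x hx
    fun_prop
  · refine ae_restrict_of_forall_mem measurableSet_Ioi fun x hx => ?_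
    have : 0 < x := hx
    rw [norm_inv, ← abs_add_div_sq hp hr.le hx, norm_abs_eq_norm, Real.norm_of_nonneg (by positivity)]
    exact inv_anti₀ hp (le_add_of_nonneg_right (by positivity))
  · change (p + r / x ^ 2)⁻¹ • |p + r / x ^ 2| • f (p * x - r / x) = f (p * x - r / x)
    rw [abs_add_div_sq hp hr.le hx, smul_smul, inv_mul_cancel₀ (hne x hx), one_smul]

lemma integral_Ioi_comp_mul_sub_div {f : ℝ → E} (hf : Integrable f) (heven : ∀ u, f (-u) = f u)
    (hp : 0 < p) (hr : 0 < r) :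
    ∫ x in Ioi 0, f (p * x - r / x) = (2 * p)⁻¹ • ∫ u, f u := by
  set u : ℝ → ℝ := fun x => p * x - r / x
  have hc : 0 < r / p := div_pos hr hp
  have hflip : ∀ x ∈ Ioi (0 : ℝ), f (u (r / p / x)) = f (u x) := fun x hx => by
    have : x ≠ 0 := ne_of_gt hx
    rw [← heven]
    congr 1
    simp only [u]
    field_simp
    ring
  have hint : IntegrableOn (fun x => f (u x)) (Ioi 0) := integrableOn_Ioi_comp_mul_sub_div hp hr hf
  have hint_flip : IntegrableOn (fun x => (r / p / x ^ 2) • f (u x)) (Ioi 0) :=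
    ((integrableOn_Ioi_comp_const_div_iff hc).2 hint).congr_fun
      (fun x hx => by simp only [hflip x hx]) measurableSet_Ioi
  have hJ : ∫ x in Ioi 0, f (u x) = ∫ x in Ioi 0, (r / p / x ^ 2) • f (u x) := by
    rw [← integral_Ioi_comp_const_div hc]
    exact setIntegral_congr_fun measurableSet_Ioi fun x hx => by rw [hflip x hx]
  have hsplit : ∫ x in Ioi 0, (p + r / x ^ 2) • f (u x) =
      ∫ x in Ioi 0, (p • f (u x) + p • ((r / p / x ^ 2) • f (u x))) :=
    setIntegral_congr_fun measurableSet_Ioi fun x _ => by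
      rw [smul_smul, ← add_smul]
      field_simp
  change ∫ x in Ioi 0, f (u x) = _
  rw [integral_eq_integral_Ioi_comp_mul_sub_div hp hr, hsplit,
    integral_add (f := fun x => p • f (u x)) (g := fun x => p • ((r / p / x ^ 2) • f (u x)))
      (hint.smul p) (hint_flip.smul p), integral_smul, integral_smul, ← hJ, ← two_smul ℝ,
    smul_smul, smul_smul, show (2 * p)⁻¹ * 2 * p = 1 by field_simp, one_smul]

end MulSubDiv

lemma integral_Ioi_exp_neg_mul_sq_sub_div_sq {A B : ℝ} (hA : 0 < A) (hB : 0 ≤ B) :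
    ∫ x in Ioi 0, exp (-A * x ^ 2 - B / x ^ 2) = √(π / A) / 2 * exp (-2 * √(A * B)) := by
  rcases hB.eq_or_lt with rfl | hB
  · simpa using integral_gaussian_Ioi A
  have hsqA := sq_sqrt hA.le
  have hsqB := sq_sqrt hB.le
  have hcomplete : ∀ x ∈ Ioi (0 : ℝ), exp (-A * x ^ 2 - B / x ^ 2) =
      exp (-2 * √(A * B)) * exp (-(√A * x - √B / x) ^ 2) := fun x hx => by
    have : x ≠ 0 := ne_of_gt hx
    rw [← exp_add, sqrt_mul hA.le]
    congr 1
    field_simp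
    linear_combination (x ^ 4) * hsqA + hsqB
  have hgauss : ∫ u, exp (-u ^ 2) = √π := by simpa using integral_gaussian 1
  rw [setIntegral_congr_fun measurableSet_Ioi hcomplete, integral_const_mul,
    integral_Ioi_comp_mul_sub_div (f := fun u => exp (-u ^ 2))
      (by simpa using integrable_exp_neg_mul_sq one_pos) (by simp) (sqrt_pos.2 hA)
      (sqrt_pos.2 hB), hgauss, sqrt_div' _ hA.le, smul_eq_mul]
  ring

section DivOneAddSq

variable {E : Type*} [NormedAddCommGroup E] [NormedSpace ℝ E] {t : ℝ}

lemma hasDerivAt_div_one_add_sq (t w : ℝ) :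
    HasDerivAt (fun w => t / (1 + w ^ 2)) (-(2 * t * w / (1 + w ^ 2) ^ 2)) w := by
  refine ((hasDerivAt_const w t).div ((hasDerivAt_pow 2 w).const_add 1)
    (by positivity)).congr_deriv ?_
  simp only [Nat.cast_ofNat, zero_mul, zero_sub, neg_div]
  ring

lemma strictAntiOn_div_one_add_sq (ht : 0 < t) :
    StrictAntiOn (fun w => t / (1 + w ^ 2)) (Ioi 0) := fun x hx y _ hxy => by
  have : 0 < x := hx
  exact div_lt_div_of_pos_left ht (by positivity) (by gcongr)

lemma image_div_one_add_sq_Ioi (ht : 0 < t) :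
    (fun w => t / (1 + w ^ 2)) '' Ioi 0 = Ioo 0 t := by
  refine Subset.antisymm (image_subset_iff.2 fun w hw => ?_) fun τ ⟨hτ, hτt⟩ => ?_
  · have : 0 < w := hw
    exact ⟨by positivity, div_lt_self ht (by nlinarith)⟩
  · have hw : 0 < (t - τ) / τ := div_pos (by linarith) hτ
    refine ⟨√((t - τ) / τ), sqrt_pos.2 hw, ?_⟩
    simp only [sq_sqrt hw.le]
    field_simp
    ring

lemma integral_Ioo_eq_integral_Ioi_div_one_add_sq (ht : 0 < t) (g : ℝ → E) :
    ∫ τ in Ioo 0 t, g τ = ∫ w in Ioi 0, (2 * t * w / (1 + w ^ 2) ^ 2) • g (t / (1 + w ^ 2)) := by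
  rw [← image_div_one_add_sq_Ioi ht, integral_image_eq_integral_abs_deriv_smul measurableSet_Ioi
    (fun w _ => (hasDerivAt_div_one_add_sq t w).hasDerivWithinAt)
    (strictAntiOn_div_one_add_sq ht).injOn]
  refine setIntegral_congr_fun measurableSet_Ioi fun w hw => ?_
  have : 0 < w := hw
  rw [abs_neg, abs_of_pos (by positivity)]

end DivOneAddSq

lemma rpow_three_halves {x : ℝ} (hx : 0 ≤ x) : x ^ ((3 : ℝ) / 2) = x * √x := by
  rw [show (3 : ℝ) / 2 = 1 + 1 / 2 by norm_num, rpow_add' hx (by norm_num), rpow_one,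
    ← sqrt_eq_rpow]

lemma jacobian_mul_integrand_div_one_add_sq {β γ t w : ℝ} (ht : 0 < t) (hw : 0 < w) :
    2 * t * w / (1 + w ^ 2) ^ 2 *
        (exp (-β / (t - t / (1 + w ^ 2))) * exp (-γ / (t / (1 + w ^ 2))) *
          (1 / ((t / (1 + w ^ 2)) ^ ((3 : ℝ) / 2) * √(t - t / (1 + w ^ 2))))) =
      2 / t * exp (-(β + γ) / t) * exp (-(γ / t) * w ^ 2 - (β / t) / w ^ 2) := by
  have hs : 0 < 1 + w ^ 2 := by positivity
  obtain ⟨τ, hτ, rfl⟩ : ∃ τ, 0 < τ ∧ t = τ * (1 + w ^ 2) :=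
    ⟨t / (1 + w ^ 2), div_pos ht hs, by field_simp⟩
  have hτt : τ * (1 + w ^ 2) / (1 + w ^ 2) = τ := by field_simp
  have hsub : τ * (1 + w ^ 2) - τ = τ * w ^ 2 := by ring
  have hsqrt : √(τ * w ^ 2) = √τ * w := by rw [sqrt_mul hτ.le, sqrt_sq hw.le]
  have hroot : √τ ^ 2 = τ := sq_sqrt hτ.le
  have hexponent : -β / (τ * w ^ 2) + -γ / τ = -(β + γ) / (τ * (1 + w ^ 2)) +
      (-(γ / (τ * (1 + w ^ 2))) * w ^ 2 - β / (τ * (1 + w ^ 2)) / w ^ 2) := by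
    field_simp
    ring
  have hkernel : τ * √τ * (√τ * w) = τ ^ 2 * w := by linear_combination τ * w * hroot
  have hfactor : 2 * (τ * (1 + w ^ 2)) * w / (1 + w ^ 2) ^ 2 * (1 / (τ * √τ * (√τ * w))) =
      2 / (τ * (1 + w ^ 2)) := by
    rw [hkernel]
    field_simp
  rw [hτt, hsub, hsqrt, rpow_three_halves hτ.le, mul_assoc (2 / _), ← exp_add, ← exp_add,
    hexponent]
  linear_combination exp (-(β + γ) / (τ * (1 + w ^ 2)) +
      (-(γ / (τ * (1 + w ^ 2))) * w ^ 2 - β / (τ * (1 + w ^ 2)) / w ^ 2)) * hfactor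

theorem integral_Ioo_exp_neg_div_sub_mul_exp_neg_div {β γ t : ℝ} (hβ : 0 ≤ β) (hγ : 0 < γ)
    (ht : 0 < t) :
    ∫ τ in Ioo 0 t, exp (-β / (t - τ)) * exp (-γ / τ) * (1 / (τ ^ ((3 : ℝ) / 2) * √(t - τ))) =
      √(π / (γ * t)) * exp (-(√β + √γ) ^ 2 / t) := by
  rw [integral_Ioo_eq_integral_Ioi_div_one_add_sq ht]
  simp_rw [smul_eq_mul]
  rw [setIntegral_congr_fun measurableSet_Ioi fun w hw =>
      jacobian_mul_integrand_div_one_add_sq ht hw, integral_const_mul,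
    integral_Ioi_exp_neg_mul_sq_sub_div_sq (div_pos hγ ht) (div_nonneg hβ ht.le)]
  have hroots : √(γ / t * (β / t)) = √β * √γ / t := by
    rw [show γ / t * (β / t) = (√β * √γ / t) ^ 2 by
      rw [div_pow, mul_pow, sq_sqrt hβ, sq_sqrt hγ.le]; ring]
    exact sqrt_sq (by positivity)
  have hprefactor : √(π / (γ / t)) = t * √(π / (γ * t)) := by
    rw [show π / (γ / t) = t ^ 2 * (π / (γ * t)) by field_simp, sqrt_mul (sq_nonneg t),
      sqrt_sq ht.le]
  have hexponent : -(√β + √γ) ^ 2 / t = -(β + γ) / t + -2 * (√β * √γ / t) := by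
    rw [add_sq, sq_sqrt hβ, sq_sqrt hγ.le]
    ring
  rw [hroots, hprefactor, hexponent, exp_add]
  field_simp

lemma sqrt_sq_div_four_mul (x : ℝ) {a : ℝ} (ha : 0 < a) : √(x ^ 2 / (4 * a)) = |x| / (2 * √a) := by
  rw [sqrt_div' _ (by positivity), sqrt_sq_eq_abs, sqrt_mul (by norm_num),
    show (4 : ℝ) = 2 ^ 2 by norm_num, sqrt_sq zero_le_two]

theorem stmt3 (a₁ a₂ y q t : ℝ) (ha₁ : 0 < a₁) (ha₂ : 0 < a₂) (hq : q ≠ 0) (ht : 0 < t) :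
    (∫ τ in Set.Ioo (0 : ℝ) t,
        Real.exp (-y ^ 2 / (4 * a₁ * (t - τ))) * Real.exp (-q ^ 2 / (4 * a₂ * τ)) *
          (1 / (τ ^ ((3 : ℝ) / 2) * Real.sqrt (t - τ)))) =
      (2 * Real.sqrt (π * a₂) / (|q| * Real.sqrt t)) *
        Real.exp (-(|y| / (2 * Real.sqrt (a₁ * t)) + |q| / (2 * Real.sqrt (a₂ * t))) ^ 2) := by
  have hregroup : ∀ x a s : ℝ, -x ^ 2 / (4 * a * s) = -(x ^ 2 / (4 * a)) / s := fun x a s => by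
    rw [neg_div, neg_div, div_div]
  simp_rw [hregroup y a₁, hregroup q a₂]
  rw [integral_Ioo_exp_neg_div_sub_mul_exp_neg_div (by positivity) (by positivity) ht,
    sqrt_sq_div_four_mul y ha₁, sqrt_sq_div_four_mul q ha₂]
  have hprefactor : √(π / (q ^ 2 / (4 * a₂) * t)) = 2 * √(π * a₂) / (|q| * √t) := by
    rw [show π / (q ^ 2 / (4 * a₂) * t) = (2 * √(π * a₂) / (|q| * √t)) ^ 2 by
      rw [div_pow, mul_pow, mul_pow, sq_sqrt (by positivity), sq_sqrt ht.le, sq_abs]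
      field_simp
      ring]
    exact sqrt_sq (by positivity)
  rw [hprefactor, sqrt_mul ha₁.le, sqrt_mul ha₂.le]
  congr 2
  field_simp
  rw [sq_sqrt ht.le]
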